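/- Let θ > 0 and θ*_2 > 0, and set θ*_1 = 1, θ*_3 = θ, θ*_i = θ(1 + θ/(i−2)) for i ≥ 4. Define δ by δ_1 = 0, δ_2 = 1/(1+θ*_2), and δ_i = ((i−1)/(i−1+θ*_i))·( δ_{i−1} + (θ*_{i−1}/(i−2+θ*_{i−1}))·δ_{i−2} ) for i ≥ 3. Then: (a) for every n ≥ 3, δ_n = (n−1)!·(θ²+θ+2)·(θ+2)_{(n−3)} / ( (1+θ*_2)·(θ+2)·Π_{k=1}^{n−2} ( k(k+1) + θ(θ+k) ) ); (b) with z_1(θ) = (3+θ − √((1−θ)(1+3θ)))/2 and z_2(θ) = (3+θ + √((1−θ)(1+3θ)))/2 (complex square root; z_1, z_2 are complex conjugates when θ > 1), lim_{n→∞} δ_n = ((θ²+θ+2)/(1+θ*_2)) · Γ(z_1(θ))Γ(z_2(θ))/Γ(z_1(θ)+z_2(θ)), where Γ is the complex Gamma function and the right-hand side is real. -/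

import Mathlib

/-!
Writing `θ*_i = θ (i - 2 + θ) / (i - 2)`, the coefficients of the recurrence become ratios of the
quadratics `q k = quadFactor θ k = k (k + 1) + θ (θ + k)`: for `i ≥ 5` it reads
`δ_i = (i-1)(i-2) / q(i-2) · (δ_{i-1} + θ (θ + i - 3) / q(i-3) · δ_{i-2})`.
The closed form satisfies this two-step recurrence and agrees with `δ_3` and `δ_4`.

For the limit, `q (k + 1) = (z₁ + k)(z₂ + k)` because `z₁ + z₂ = θ + 3` and `z₁ z₂ = θ² + θ + 2`.
Hence `δ_{m+3}` is, up to a factor tending to `1`, a constant multiple of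
`GammaSeq z₁ m · GammaSeq z₂ m / GammaSeq (θ + 2) m`, and Euler's limit formula gives
`Γ(z₁) Γ(z₂) / Γ(θ + 2)`; finally `(θ + 2) Γ(θ + 2) = Γ(z₁ + z₂)`.
-/

open Finset Filter

/-- Rising factorial `(x)_{(j)} = x (x+1) ⋯ (x+j-1)`. -/
noncomputable def risingFac (x : ℝ) (j : ℕ) : ℝ := ∏ k ∈ Finset.range j, (x + k)

open Topology Complex

def quadFactor (θ x : ℝ) : ℝ := x * (x + 1) + θ * (θ + x)

noncomputable def deltaClosedForm (θ θ₂ : ℝ) (m : ℕ) : ℝ :=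
  ((m + 2).factorial : ℝ) * (θ ^ 2 + θ + 2) * risingFac (θ + 2) m
    / ((1 + θ₂) * (θ + 2) * ∏ k ∈ Icc 1 (m + 1), quadFactor θ k)

def DeltaRecurrence (θs δ : ℕ → ℝ) : Prop :=
  ∀ i : ℕ, 3 ≤ i →
    δ i = (((i : ℝ) - 1) / ((i : ℝ) - 1 + θs i))
      * (δ (i - 1) + (θs (i - 1) / ((i : ℝ) - 2 + θs (i - 1))) * δ (i - 2))

lemma risingFac_succ (x : ℝ) (j : ℕ) : risingFac x (j + 1) = risingFac x j * (x + j) :=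
  prod_range_succ _ _

lemma quadFactor_one (θ : ℝ) : quadFactor θ 1 = θ ^ 2 + θ + 2 := by
  rw [quadFactor]
  ring

lemma quadFactor_pos (θ : ℝ) {x : ℝ} (hx : 0 < x) : 0 < quadFactor θ x := by
  rw [quadFactor]
  nlinarith [sq_nonneg (θ + x / 2)]

lemma div_add_thetaStar {θ x y : ℝ} (hx : x ≠ 0) (hy : y = x + 1) :
    y / (y + θ * (1 + θ / x)) = x * y / quadFactor θ x := by
  subst hy
  rw [quadFactor]
  field_simp
  ring

lemma thetaStar_div_add_thetaStar {θ x y : ℝ} (hx : x ≠ 0) (hy : y = x + 1) :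
    θ * (1 + θ / x) / (y + θ * (1 + θ / x)) = θ * (θ + x) / quadFactor θ x := by
  subst hy
  rw [quadFactor]
  field_simp
  ring

lemma deltaClosedForm_add_two (θ θ₂ : ℝ) (m : ℕ) :
    deltaClosedForm θ θ₂ (m + 2)
      = (((m + 5 : ℕ) : ℝ) - 1) / (((m + 5 : ℕ) : ℝ) - 1 + θ * (1 + θ / (((m + 5 : ℕ) : ℝ) - 2)))
        * (deltaClosedForm θ θ₂ (m + 1)
          + θ * (1 + θ / (((m + 4 : ℕ) : ℝ) - 2))
            / (((m + 5 : ℕ) : ℝ) - 2 + θ * (1 + θ / (((m + 4 : ℕ) : ℝ) - 2)))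
            * deltaClosedForm θ θ₂ m) := by
  rw [div_add_thetaStar (by push_cast; linarith) (by ring),
    thetaStar_div_add_thetaStar (by push_cast; linarith) (by push_cast; ring)]
  simp only [deltaClosedForm, risingFac_succ, Nat.factorial_succ,
    prod_Icc_succ_top (by omega : 1 ≤ m + 1 + 1), prod_Icc_succ_top (by omega : 1 ≤ m + 2 + 1)]
  push_cast
  simp only [div_eq_mul_inv, mul_inv]
  ring_nf

section Recurrence

variable {θ : ℝ} {θs δ : ℕ → ℝ}

lemma delta_three (hθs3 : θs 3 = θ) (hδ1 : δ 1 = 0) (hδ2 : δ 2 = 1 / (1 + θs 2))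
    (hδrec : DeltaRecurrence θs δ) :
    δ 3 = deltaClosedForm θ (θs 2) 0 := by
  have hq₁ := (quadFactor_pos θ one_pos).ne'
  rw [hδrec 3 le_rfl]
  simp only [deltaClosedForm, risingFac, ← quadFactor_one]
  norm_num [hθs3, hδ1, hδ2]
  rw [mul_div_mul_right _ _ hq₁, div_mul_eq_div_div, add_comm θ]
  ring

lemma delta_four (hθ : θ + 2 ≠ 0) (hθs3 : θs 3 = θ)
    (hθs : ∀ i : ℕ, 4 ≤ i → θs i = θ * (1 + θ / ((i : ℝ) - 2)))
    (hδ1 : δ 1 = 0) (hδ2 : δ 2 = 1 / (1 + θs 2)) (hδrec : DeltaRecurrence θs δ) :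
    δ 4 = deltaClosedForm θ (θs 2) 1 := by
  have hq₁ := (quadFactor_pos θ one_pos).ne'
  have hq₂ := (quadFactor_pos θ two_pos).ne'
  have hθ' : 2 + θ ≠ 0 := by rwa [add_comm]
  rw [hδrec 4 (by norm_num), hθs 4 le_rfl, div_add_thetaStar (by norm_num) (by ring)]
  simp only [Nat.reduceSub]
  rw [delta_three hθs3 hδ1 hδ2 hδrec, hθs3, hδ2]
  simp only [deltaClosedForm, risingFac, ← quadFactor_one]
  norm_num [prod_Icc_succ_top]
  -- if `1 + θ*₂ = 0`, both sides vanish through the convention `x / 0 = 0`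
  by_cases hθ₂ : 1 + θs 2 = 0
  · simp [hθ₂]
  · field_simp
    ring

theorem delta_eq_deltaClosedForm (hθ : θ + 2 ≠ 0) (hθs3 : θs 3 = θ)
    (hθs : ∀ i : ℕ, 4 ≤ i → θs i = θ * (1 + θ / ((i : ℝ) - 2)))
    (hδ1 : δ 1 = 0) (hδ2 : δ 2 = 1 / (1 + θs 2)) (hδrec : DeltaRecurrence θs δ) (m : ℕ) :
    δ (m + 3) = deltaClosedForm θ (θs 2) m := by
  induction m using Nat.twoStepInduction with
  | zero => exact delta_three hθs3 hδ1 hδ2 hδrec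
  | one => exact delta_four hθ hθs3 hθs hδ1 hδ2 hδrec
  | more m ih₀ ih₁ =>
    rw [deltaClosedForm_add_two, ← ih₀, ← ih₁, ← hθs (m + 5) (by omega),
      ← hθs (m + 4) (by omega)]
    exact hδrec (m + 5) (by omega)

end Recurrence

theorem tendsto_natCast_add_div_natCast_add {𝕜 : Type*} [Field 𝕜] [TopologicalSpace 𝕜]
    [CharZero 𝕜] [ContinuousSMul ℚ≥0 𝕜] [IsTopologicalSemiring 𝕜] [ContinuousInv₀ 𝕜] (a b : 𝕜) :
    Tendsto (fun n : ℕ ↦ ((n : 𝕜) + a) / (n + b)) atTop (𝓝 1) := by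
  have h := (tendsto_natCast_div_add_atTop b).div (tendsto_natCast_div_add_atTop a) one_ne_zero
  rw [div_one] at h
  refine h.congr' ((eventually_ne_atTop 0).mono fun n hn ↦ ?_)
  have hn' : (n : 𝕜) ≠ 0 := Nat.cast_ne_zero.mpr hn
  simp only [Pi.div_apply, div_div_div_cancel_left' _ _ hn']

lemma GammaSeq_mul_GammaSeq_div_GammaSeq {z₁ z₂ w : ℂ} (h : z₁ + z₂ = w + 1) {m : ℕ}
    (hm : m ≠ 0) :
    GammaSeq z₁ m * GammaSeq z₂ m / GammaSeq w m
      = m * m.factorial * (∏ j ∈ range (m + 1), (w + j))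
        / ((∏ j ∈ range (m + 1), (z₁ + j)) * ∏ j ∈ range (m + 1), (z₂ + j)) := by
  have hm' : (m : ℂ) ≠ 0 := Nat.cast_ne_zero.mpr hm
  have hpow : (m : ℂ) ^ z₁ * (m : ℂ) ^ z₂ = (m : ℂ) ^ w * m := by
    rw [← cpow_add _ _ hm', h, cpow_add _ _ hm', cpow_one]
  have hw : (m : ℂ) ^ w ≠ 0 := by simp [cpow_eq_zero_iff, hm']
  have hfac : (m.factorial : ℂ) ≠ 0 := Nat.cast_ne_zero.mpr m.factorial_ne_zero
  simp only [GammaSeq, div_mul_div_comm, mul_mul_mul_comm _ (m.factorial : ℂ), hpow]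
  field_simp

theorem tendsto_factorial_mul_prod_div_prod {z₁ z₂ w : ℂ} (h : z₁ + z₂ = w + 1)
    (hw : ∀ n : ℕ, w ≠ -n) :
    Tendsto (fun m : ℕ ↦ ((m + 2).factorial : ℂ) * (∏ j ∈ range m, (w + j))
        / ((∏ j ∈ range (m + 1), (z₁ + j)) * ∏ j ∈ range (m + 1), (z₂ + j)))
      atTop (𝓝 (Gamma z₁ * Gamma z₂ / Gamma w)) := by
  have hGamma := ((GammaSeq_tendsto_Gamma z₁).mul (GammaSeq_tendsto_Gamma z₂)).div
    (GammaSeq_tendsto_Gamma w) (Gamma_ne_zero hw)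
  have hlim := ((tendsto_natCast_add_div_natCast_add (1 : ℂ) 0).mul
    (tendsto_natCast_add_div_natCast_add (2 : ℂ) w)).mul hGamma
  rw [one_mul, one_mul] at hlim
  refine hlim.congr' ((eventually_ne_atTop 0).mono fun m hm ↦ ?_)
  have hm' : (m : ℂ) ≠ 0 := Nat.cast_ne_zero.mpr hm
  have hwm : (m : ℂ) + w ≠ 0 := by
    rw [add_comm, ← sub_neg_eq_add, sub_ne_zero]
    exact hw m
  simp only [Pi.div_apply, add_zero]
  rw [GammaSeq_mul_GammaSeq_div_GammaSeq h hm, prod_range_succ _ m, Nat.factorial_succ,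
    Nat.factorial_succ]
  push_cast
  field_simp
  ring

lemma ofReal_prod_Icc_quadFactor {θ : ℝ} {z₁ z₂ : ℂ} (hsum : z₁ + z₂ = θ + 3)
    (hprod : z₁ * z₂ = θ ^ 2 + θ + 2) (n : ℕ) :
    ((∏ k ∈ Icc 1 n, quadFactor θ k : ℝ) : ℂ)
      = (∏ j ∈ range n, (z₁ + j)) * ∏ j ∈ range n, (z₂ + j) := by
  rw [← prod_mul_distrib, ← Ico_add_one_right_eq_Icc, prod_Ico_eq_prod_range,
    add_tsub_cancel_right]
  push_cast
  refine prod_congr rfl fun j _ ↦ ?_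
  simp only [quadFactor]
  push_cast
  linear_combination (-1 : ℂ) * hprod - (j : ℂ) * hsum

lemma ofReal_deltaClosedForm {θ θ₂ : ℝ} {z₁ z₂ : ℂ} (hsum : z₁ + z₂ = θ + 3)
    (hprod : z₁ * z₂ = θ ^ 2 + θ + 2) (m : ℕ) :
    (deltaClosedForm θ θ₂ m : ℂ)
      = (((θ ^ 2 + θ + 2) / (1 + θ₂) : ℝ) : ℂ) / ((θ : ℂ) + 2)
        * (((m + 2).factorial : ℂ) * (∏ j ∈ range m, ((θ : ℂ) + 2 + j))
          / ((∏ j ∈ range (m + 1), (z₁ + j)) * ∏ j ∈ range (m + 1), (z₂ + j))) := by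
  simp only [deltaClosedForm, risingFac, ofReal_div, ofReal_mul]
  rw [ofReal_prod_Icc_quadFactor hsum hprod]
  push_cast
  simp only [div_eq_mul_inv, mul_inv]
  ring
theorem stmt10_general (θ : ℝ) (hθ : 0 < θ)
    (θs : ℕ → ℝ) (hθs3 : θs 3 = θ)
    (hθs : ∀ i : ℕ, 4 ≤ i → θs i = θ * (1 + θ / ((i : ℝ) - 2)))
    (δ : ℕ → ℝ) (hδ1 : δ 1 = 0) (hδ2 : δ 2 = 1 / (1 + θs 2))
    (hδrec : ∀ i : ℕ, 3 ≤ i →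
      δ i = (((i : ℝ) - 1) / ((i : ℝ) - 1 + θs i))
        * (δ (i - 1) + (θs (i - 1) / ((i : ℝ) - 2 + θs (i - 1))) * δ (i - 2))) :
    (∀ n : ℕ, 3 ≤ n →
      δ n = ((n - 1).factorial : ℝ) * (θ ^ 2 + θ + 2) * risingFac (θ + 2) (n - 3)
        / ((1 + θs 2) * (θ + 2)
            * ∏ k ∈ Finset.Icc 1 (n - 2), ((k : ℝ) * ((k : ℝ) + 1) + θ * (θ + k)))) ∧
    Tendsto (fun n : ℕ => (δ n : ℂ)) atTop (nhds
      ((((θ ^ 2 + θ + 2) / (1 + θs 2) : ℝ) : ℂ)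
        * (Complex.Gamma ((3 + θ - ((((1 - θ) * (1 + 3 * θ) : ℝ) : ℂ)) ^ ((1 : ℂ) / 2)) / 2)
          * Complex.Gamma ((3 + θ + ((((1 - θ) * (1 + 3 * θ) : ℝ) : ℂ)) ^ ((1 : ℂ) / 2)) / 2)
          / Complex.Gamma
              ((3 + θ - ((((1 - θ) * (1 + 3 * θ) : ℝ) : ℂ)) ^ ((1 : ℂ) / 2)) / 2
                + (3 + θ + ((((1 - θ) * (1 + 3 * θ) : ℝ) : ℂ)) ^ ((1 : ℂ) / 2)) / 2)))) := by
  have hδ := delta_eq_deltaClosedForm (by linarith) hθs3 hθs hδ1 hδ2 hδrec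
  refine ⟨fun n hn ↦ ?_, ?_⟩
  · obtain ⟨m, rfl⟩ := Nat.exists_eq_add_of_le' hn
    exact hδ m
  set S : ℂ := (((1 - θ) * (1 + 3 * θ) : ℝ) : ℂ) ^ ((1 : ℂ) / 2)
  have hS : S ^ 2 = (((1 - θ) * (1 + 3 * θ) : ℝ) : ℂ) := by
    simp only [S, one_div, cpow_ofNat_inv_pow]
  have hsum : (3 + θ - S) / 2 + (3 + θ + S) / 2 = (θ : ℂ) + 3 := by ring
  have hprod : (3 + θ - S) / 2 * ((3 + θ + S) / 2) = (θ : ℂ) ^ 2 + θ + 2 := by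
    push_cast at hS
    linear_combination (-1 / 4 : ℂ) * hS
  have hw : ∀ n : ℕ, (θ : ℂ) + 2 ≠ -n := fun n h ↦ by
    have := congrArg re h
    simp only [add_re, ofReal_re, re_ofNat, neg_re, natCast_re] at this
    linarith [n.cast_nonneg (α := ℝ)]
  have hlim := (tendsto_factorial_mul_prod_div_prod (hsum.trans (by ring)) hw).const_mul
    ((((θ ^ 2 + θ + 2) / (1 + θs 2) : ℝ) : ℂ) / ((θ : ℂ) + 2))
  rw [← tendsto_add_atTop_iff_nat 3]
  convert hlim using 1
  · funext m
    rw [hδ m, ofReal_deltaClosedForm hsum hprod]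
  · rw [hsum, show (θ : ℂ) + 3 = θ + 2 + 1 by ring, Gamma_add_one _ (by simpa using hw 0)]
    field_simp

/-- exact derangement probabilities `δ_n(θ)` of the playground-game
Feller-type coupling and their limit in terms of the complex Gamma function. -/
theorem stmt10 (θ θ2 : ℝ) (hθ : 0 < θ) (hθ2 : 0 < θ2)
    (θs : ℕ → ℝ) (hθs1 : θs 1 = 1) (hθs2 : θs 2 = θ2) (hθs3 : θs 3 = θ)
    (hθs : ∀ i : ℕ, 4 ≤ i → θs i = θ * (1 + θ / ((i : ℝ) - 2)))
    (δ : ℕ → ℝ) (hδ1 : δ 1 = 0) (hδ2 : δ 2 = 1 / (1 + θs 2))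
    (hδrec : ∀ i : ℕ, 3 ≤ i →
      δ i = (((i : ℝ) - 1) / ((i : ℝ) - 1 + θs i))
        * (δ (i - 1) + (θs (i - 1) / ((i : ℝ) - 2 + θs (i - 1))) * δ (i - 2))) :
    (∀ n : ℕ, 3 ≤ n →
      δ n = ((n - 1).factorial : ℝ) * (θ ^ 2 + θ + 2) * risingFac (θ + 2) (n - 3)
        / ((1 + θs 2) * (θ + 2)
            * ∏ k ∈ Finset.Icc 1 (n - 2), ((k : ℝ) * ((k : ℝ) + 1) + θ * (θ + k)))) ∧
    Tendsto (fun n : ℕ => (δ n : ℂ)) atTop (nhds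
      ((((θ ^ 2 + θ + 2) / (1 + θs 2) : ℝ) : ℂ)
        * (Complex.Gamma ((3 + θ - ((((1 - θ) * (1 + 3 * θ) : ℝ) : ℂ)) ^ ((1 : ℂ) / 2)) / 2)
          * Complex.Gamma ((3 + θ + ((((1 - θ) * (1 + 3 * θ) : ℝ) : ℂ)) ^ ((1 : ℂ) / 2)) / 2)
          / Complex.Gamma
              ((3 + θ - ((((1 - θ) * (1 + 3 * θ) : ℝ) : ℂ)) ^ ((1 : ℂ) / 2)) / 2
                + (3 + θ + ((((1 - θ) * (1 + 3 * θ) : ℝ) : ℂ)) ^ ((1 : ℂ) / 2)) / 2)))) :=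
  stmt10_general θ hθ θs hθs3 hθs δ hδ1 hδ2 hδrec
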